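/- Let p > 1, γ > 0 and ω > 4/γ². Set y₀ = (2/((p−1)√ω))·arctanh(2/(γ√ω)) and define φ : ℝ∖{0} → ℝ by φ(x) = sign(x)·(((p+1)ω/2)·sech²(((p−1)√ω/2)·(|x|+y₀)))^{1/(p−1)}. Then φ is twice continuously differentiable on ℝ∖{0} and satisfies −φ''(x) + ω·φ(x) − |φ(x)|^{p−1}·φ(x) = 0 for all x ≠ 0; the one-sided limits φ(0±) and φ'(0±) exist and satisfy φ'(0−) = φ'(0+) and φ(0+) − φ(0−) = −γ·φ'(0+). -/

import Mathlib

open MeasureTheory Real Set Filter Topology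

noncomputable def arctanh (x : ℝ) : ℝ := Real.log ((1 + x) / (1 - x)) / 2

/-!
On each half-line the profile is a translate of the soliton
`ψ(y) = ((p+1)ω/2 · sech²(b y))^{1/(p-1)}`, `b = (p-1)√ω/2`, which satisfies
`ψ' = -√ω tanh(b y) ψ` and hence `ψ'' = ωψ - ψ^p`. The stationary equation is invariant under
`u ↦ -u(-·)`, so the odd extension `sign x · ψ(|x| + y₀)` solves it away from `0`, both one-sided
derivatives at `0` equal `ψ'(y₀)`, and the jump is `2ψ(y₀)`. The shift `y₀` is chosen so that
`tanh(b y₀) = 2/(γ√ω)`, which turns `ψ' = -√ω tanh(b y) ψ` at `y₀` into `2ψ(y₀) = -γψ'(y₀)`.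
-/

namespace Real

theorem sign_mul_self_of_ne_zero {x : ℝ} (hx : x ≠ 0) : sign x * sign x = 1 := by
  rcases sign_apply_eq_of_ne_zero x hx with h | h <;> rw [h] <;> norm_num

theorem abs_sign_of_ne_zero {x : ℝ} (hx : x ≠ 0) : |sign x| = 1 := by
  rcases sign_apply_eq_of_ne_zero x hx with h | h <;> simp [h]

theorem sign_mul_self_eq_abs (x : ℝ) : sign x * x = |x| := by
  rcases lt_trichotomy x 0 with hx | rfl | hx
  · rw [sign_of_neg hx, abs_of_neg hx, neg_one_mul]
  · simp
  · rw [sign_of_pos hx, abs_of_pos hx, one_mul]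

theorem one_div_cosh_sq (x : ℝ) : (1 / cosh x) ^ 2 = 1 - tanh x ^ 2 := by
  have := (cosh_pos x).ne'
  rw [tanh_eq_sinh_div_cosh]
  field_simp
  rw [cosh_sq x]
  ring

theorem hasDerivAt_tanh (x : ℝ) : HasDerivAt tanh (1 - tanh x ^ 2) x := by
  have h := (hasDerivAt_sinh x).div (hasDerivAt_cosh x) (cosh_pos x).ne'
  rw [show sinh / cosh = tanh from funext fun y => (tanh_eq_sinh_div_cosh y).symm] at h
  refine h.congr_deriv ?_
  have := (cosh_pos x).ne'
  rw [← one_div_cosh_sq]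
  field_simp
  linear_combination cosh_sq x

theorem hasDerivAt_tanh_const_mul (b y : ℝ) :
    HasDerivAt (fun y => tanh (b * y)) ((1 - tanh (b * y) ^ 2) * b) y :=
  (hasDerivAt_tanh (b * y)).comp y (by simpa using (hasDerivAt_id y).const_mul b)

end Real

theorem arctanh_eq_artanh {t : ℝ} (ht : t ∈ Icc (-1) 1) : arctanh t = artanh t := by
  rw [artanh_eq_half_log ht, arctanh]
  ring

theorem tanh_arctanh {t : ℝ} (ht : t ∈ Ioo (-1) 1) : tanh (arctanh t) = t := by
  rw [arctanh_eq_artanh (Ioo_subset_Icc_self ht), tanh_artanh ht]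

theorem HasDerivAt.rpow_const_of_logDeriv {f : ℝ → ℝ} {k x : ℝ} (s : ℝ)
    (hf : HasDerivAt f (k * f x) x) (hx : 0 < f x) :
    HasDerivAt (fun y => f y ^ s) (s * k * f x ^ s) x := by
  refine (hf.rpow_const (Or.inl hx.ne')).congr_deriv ?_
  rw [rpow_sub_one hx.ne']
  field_simp

theorem hasDerivAt_one_div_cosh_mul_sq (b y : ℝ) :
    HasDerivAt (fun y => (1 / cosh (b * y)) ^ 2)
      (-2 * b * tanh (b * y) * (1 / cosh (b * y)) ^ 2) y := by
  simp only [one_div_cosh_sq]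
  refine (((hasDerivAt_tanh_const_mul b y).pow 2).const_sub 1).congr_deriv ?_
  ring

noncomputable def solitonProfile (p ω y : ℝ) : ℝ :=
  ((p + 1) * ω / 2 * (1 / cosh ((p - 1) * √ω / 2 * y)) ^ 2) ^ (1 / (p - 1))

section solitonProfile

variable {p ω : ℝ}

theorem solitonProfile_base_pos (hp : 1 < p) (hω : 0 < ω) (y : ℝ) :
    0 < (p + 1) * ω / 2 * (1 / cosh ((p - 1) * √ω / 2 * y)) ^ 2 := by
  have := cosh_pos ((p - 1) * √ω / 2 * y)
  have : 0 < p + 1 := by linarith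
  positivity

theorem solitonProfile_pos (hp : 1 < p) (hω : 0 < ω) (y : ℝ) : 0 < solitonProfile p ω y :=
  rpow_pos_of_pos (solitonProfile_base_pos hp hω y) _

theorem solitonProfile_rpow_sub_one (hp : 1 < p) (hω : 0 < ω) (y : ℝ) :
    solitonProfile p ω y ^ (p - 1) =
      (p + 1) * ω / 2 * (1 / cosh ((p - 1) * √ω / 2 * y)) ^ 2 := by
  rw [solitonProfile, ← rpow_mul (solitonProfile_base_pos hp hω y).le,
    one_div_mul_cancel (by linarith), rpow_one]

theorem contDiff_solitonProfile (hp : 1 < p) (hω : 0 < ω) (n : WithTop ℕ∞) :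
    ContDiff ℝ n (solitonProfile p ω) := by
  refine ContDiff.rpow_const_of_ne ?_ fun y => (solitonProfile_base_pos hp hω y).ne'
  simp only [one_div, inv_pow]
  exact contDiff_const.mul
    (((contDiff_const.mul contDiff_id).cosh.pow 2).inv fun y => by positivity)

theorem hasDerivAt_solitonProfile (hp : 1 < p) (hω : 0 < ω) (y : ℝ) :
    HasDerivAt (solitonProfile p ω)
      (-√ω * tanh ((p - 1) * √ω / 2 * y) * solitonProfile p ω y) y := by
  have hbase := (hasDerivAt_one_div_cosh_mul_sq ((p - 1) * √ω / 2) y).const_mul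
    ((p + 1) * ω / 2)
  have h := HasDerivAt.rpow_const_of_logDeriv (1 / (p - 1))
    (k := -2 * ((p - 1) * √ω / 2) * tanh ((p - 1) * √ω / 2 * y))
    (hbase.congr_deriv (by ring)) (solitonProfile_base_pos hp hω y)
  refine h.congr_deriv ?_
  have : p - 1 ≠ 0 := by linarith
  rw [solitonProfile]
  field_simp

theorem deriv_solitonProfile (hp : 1 < p) (hω : 0 < ω) :
    deriv (solitonProfile p ω) =
      fun y => -√ω * tanh ((p - 1) * √ω / 2 * y) * solitonProfile p ω y :=
  funext fun y => (hasDerivAt_solitonProfile hp hω y).deriv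

/-- The amplitude `(p+1)ω/2` is what makes `ω tanh² - √ω b sech²` collapse to
`ω - (p+1)ω/2 · sech²`. -/
theorem deriv_deriv_solitonProfile (hp : 1 < p) (hω : 0 < ω) (y : ℝ) :
    deriv (deriv (solitonProfile p ω)) y =
      ω * solitonProfile p ω y - solitonProfile p ω y ^ (p - 1) * solitonProfile p ω y := by
  rw [deriv_solitonProfile hp hω, solitonProfile_rpow_sub_one hp hω, one_div_cosh_sq]
  set b := (p - 1) * √ω / 2 with hb
  have h : HasDerivAt (fun y => -√ω * tanh (b * y) * solitonProfile p ω y) _ y :=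
    ((hasDerivAt_tanh_const_mul b y).const_mul (-√ω)).mul (hasDerivAt_solitonProfile hp hω y)
  rw [h.deriv]
  linear_combination (-(tanh (b * y) ^ 2) + 1) * solitonProfile p ω y * √ω * hb
    + ((p + 1) * tanh (b * y) ^ 2 - (p - 1)) / 2 * solitonProfile p ω y * sq_sqrt hω.le

theorem stationaryNLS_solitonProfile (hp : 1 < p) (hω : 0 < ω) (y : ℝ) :
    -(deriv (deriv (solitonProfile p ω)) y) + ω * solitonProfile p ω y
      - |solitonProfile p ω y| ^ (p - 1) * solitonProfile p ω y = 0 := by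
  rw [deriv_deriv_solitonProfile hp hω, abs_of_pos (solitonProfile_pos hp hω y)]
  ring

theorem two_mul_solitonProfile_eq_neg_mul_deriv {γ y₀ : ℝ} (hp : 1 < p) (hγ : 0 < γ)
    (hω : 4 / γ ^ 2 < ω) (hy₀ : y₀ = 2 / ((p - 1) * √ω) * arctanh (2 / (γ * √ω))) :
    2 * solitonProfile p ω y₀ = -γ * deriv (solitonProfile p ω) y₀ := by
  have hω0 : 0 < ω := lt_trans (by positivity) hω
  have hs : 0 < √ω := sqrt_pos.mpr hω0
  have hγs : 2 < γ * √ω := by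
    rw [div_lt_iff₀ (by positivity)] at hω
    nlinarith [sq_sqrt hω0.le, mul_pos hγ hs]
  have htanh : tanh ((p - 1) * √ω / 2 * y₀) = 2 / (γ * √ω) := by
    have : (p - 1) * √ω / 2 * y₀ = arctanh (2 / (γ * √ω)) := by
      rw [hy₀]
      field_simp [show p - 1 ≠ 0 by linarith]
    rw [this, tanh_arctanh ⟨by linarith [div_pos two_pos (mul_pos hγ hs)],
      (div_lt_one (by positivity)).mpr hγs⟩]
  rw [(hasDerivAt_solitonProfile hp hω0 y₀).deriv, htanh]
  field_simp

end solitonProfile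

theorem deriv_comp_mul_add (f : ℝ → ℝ) (c a x : ℝ) :
    deriv (fun x => f (c * x + a)) x = c * deriv f (c * x + a) := by
  rw [deriv_comp_mul_left (f := fun y => f (y + a)) (c := c) (x := x), deriv_comp_add_const,
    smul_eq_mul]

theorem deriv_const_mul_comp_mul_add {c : ℝ} (hc : c * c = 1) (f : ℝ → ℝ) (a : ℝ) :
    deriv (fun x => c * f (c * x + a)) = fun x => deriv f (c * x + a) := by
  ext x
  rw [deriv_const_mul_field, deriv_comp_mul_add, ← mul_assoc, hc, one_mul]

noncomputable def oddExtension (ψ : ℝ → ℝ) (a x : ℝ) : ℝ := sign x * ψ (|x| + a)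

section oddExtension

variable {ψ : ℝ → ℝ} {a x : ℝ}

theorem oddExtension_eventuallyEq (hx : x ≠ 0) :
    oddExtension ψ a =ᶠ[𝓝 x] fun y => sign x * ψ (sign x * y + a) := by
  rcases hx.lt_or_gt with hx | hx
  · filter_upwards [Iio_mem_nhds hx] with y (hy : y < 0)
    simp [oddExtension, sign_of_neg hy, sign_of_neg hx, abs_of_neg hy]
  · filter_upwards [Ioi_mem_nhds hx] with y (hy : 0 < y)
    simp [oddExtension, sign_of_pos hy, sign_of_pos hx, abs_of_pos hy]

theorem deriv_oddExtension (hx : x ≠ 0) : deriv (oddExtension ψ a) x = deriv ψ (|x| + a) := by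
  rw [(oddExtension_eventuallyEq hx).deriv_eq,
    deriv_const_mul_comp_mul_add (sign_mul_self_of_ne_zero hx)]
  beta_reduce
  rw [sign_mul_self_eq_abs]

theorem stationaryNLS_oddExtension {p ω : ℝ} (hx : x ≠ 0)
    (hψ : -(deriv (deriv ψ) (|x| + a)) + ω * ψ (|x| + a) - |ψ (|x| + a)| ^ (p - 1) * ψ (|x| + a)
      = 0) :
    -(deriv (deriv (oddExtension ψ a)) x) + ω * oddExtension ψ a x
      - |oddExtension ψ a x| ^ (p - 1) * oddExtension ψ a x = 0 := by
  have hc := sign_mul_self_of_ne_zero hx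
  have hEq := oddExtension_eventuallyEq (ψ := ψ) (a := a) hx
  rw [hEq.deriv.deriv_eq, hEq.eq_of_nhds, deriv_const_mul_comp_mul_add hc, deriv_comp_mul_add,
    sign_mul_self_eq_abs, abs_mul, abs_sign_of_ne_zero hx, one_mul]
  linear_combination sign x * hψ

theorem contDiffAt_oddExtension {n : WithTop ℕ∞} (hψ : ContDiff ℝ n ψ) (hx : x ≠ 0) :
    ContDiffAt ℝ n (oddExtension ψ a) x := by
  have hline : ContDiff ℝ n fun y => sign x * y + a :=
    (contDiff_const.mul contDiff_id).add contDiff_const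
  exact (contDiffAt_const.mul (hψ.comp hline).contDiffAt).congr_of_eventuallyEq
    (oddExtension_eventuallyEq hx)

theorem tendsto_comp_abs_add {f : ℝ → ℝ} (hf : ContinuousAt f a) :
    Tendsto (fun y => f (|y| + a)) (𝓝 0) (𝓝 (f a)) :=
  hf.tendsto.comp (by simpa using ((continuous_abs.add_const a).tendsto (0 : ℝ)))

theorem tendsto_oddExtension {c : ℝ} {s : Set ℝ} (hs : ∀ y ∈ s, sign y = c)
    (hψ : ContinuousAt ψ a) : Tendsto (oddExtension ψ a) (𝓝[s] 0) (𝓝 (c * ψ a)) :=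
  (tendsto_const_nhds.mul ((tendsto_comp_abs_add hψ).mono_left nhdsWithin_le_nhds)).congr'
    (eventually_nhdsWithin_of_forall fun y hy => by rw [oddExtension, hs y hy])

theorem tendsto_deriv_oddExtension (hψ : ContinuousAt (deriv ψ) a) :
    Tendsto (deriv (oddExtension ψ a)) (𝓝[≠] 0) (𝓝 (deriv ψ a)) :=
  ((tendsto_comp_abs_add hψ).mono_left nhdsWithin_le_nhds).congr'
    (eventually_nhdsWithin_of_forall fun _ hy => (deriv_oddExtension hy).symm)

end oddExtension

/-- The odd profile `φ_{ω,γ}^{odd}` is `C²` away from the origin, solves the stationary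
NLS equation `−φ'' + ωφ − |φ|^{p−1}φ = 0` for `x ≠ 0`, and its one-sided boundary values
satisfy the δ'-vertex conditions `φ'(0−) = φ'(0+)` and `φ(0+) − φ(0−) = −γ·φ'(0+)`. -/
theorem odd_profile_solves_NLS_delta_prime (p γ ω : ℝ) (hp : 1 < p) (hγ : 0 < γ)
    (hω : 4 / γ ^ 2 < ω)
    (y₀ : ℝ) (hy₀ : y₀ = 2 / ((p - 1) * Real.sqrt ω) * arctanh (2 / (γ * Real.sqrt ω)))
    (φ : ℝ → ℝ)
    (hφ : ∀ x : ℝ, x ≠ 0 → φ x = Real.sign x * ((p + 1) * ω / 2 *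
      (1 / Real.cosh ((p - 1) * Real.sqrt ω / 2 * (|x| + y₀))) ^ 2) ^ (1 / (p - 1))) :
    ContDiffOn ℝ 2 φ {(0 : ℝ)}ᶜ ∧
    (∀ x : ℝ, x ≠ 0 → -(deriv (deriv φ) x) + ω * φ x - |φ x| ^ (p - 1) * φ x = 0) ∧
    ∃ Lp Lm Dp Dm : ℝ,
      Filter.Tendsto φ (nhdsWithin 0 (Set.Ioi 0)) (nhds Lp) ∧
      Filter.Tendsto φ (nhdsWithin 0 (Set.Iio 0)) (nhds Lm) ∧
      Filter.Tendsto (deriv φ) (nhdsWithin 0 (Set.Ioi 0)) (nhds Dp) ∧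
      Filter.Tendsto (deriv φ) (nhdsWithin 0 (Set.Iio 0)) (nhds Dm) ∧
      Dm = Dp ∧ Lp - Lm = -γ * Dp := by
  have hω0 : 0 < ω := lt_trans (by positivity) hω
  set ψ := solitonProfile p ω
  have hψ : ContDiff ℝ 2 ψ := contDiff_solitonProfile hp hω0 2
  have hφψ : EqOn φ (oddExtension ψ y₀) {0}ᶜ := fun x hx => hφ x hx
  have hlocal {x : ℝ} (hx : x ≠ 0) : φ =ᶠ[𝓝 x] oddExtension ψ y₀ :=
    hφψ.eventuallyEq_of_mem (isOpen_compl_singleton.mem_nhds hx)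
  have hderiv : EqOn (deriv φ) (deriv (oddExtension ψ y₀)) {0}ᶜ :=
    hφψ.deriv isOpen_compl_singleton
  have hderivLim :=
    tendsto_deriv_oddExtension (a := y₀) (hψ.continuous_deriv one_le_two).continuousAt
  refine ⟨fun x hx => ?_, fun x hx => ?_, 1 * ψ y₀, -1 * ψ y₀, deriv ψ y₀, deriv ψ y₀,
    ?_, ?_, ?_, ?_, rfl, ?_⟩
  · exact ((contDiffAt_oddExtension hψ hx).congr_of_eventuallyEq (hlocal hx)).contDiffWithinAt
  · rw [(hlocal hx).deriv.deriv_eq, (hlocal hx).eq_of_nhds]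
    exact stationaryNLS_oddExtension hx (stationaryNLS_solitonProfile hp hω0 _)
  · exact tendsto_nhdsWithin_congr (fun x hx => (hφψ (ne_of_gt hx)).symm)
      (tendsto_oddExtension (fun _ hy => sign_of_pos hy) hψ.continuous.continuousAt)
  · exact tendsto_nhdsWithin_congr (fun x hx => (hφψ (ne_of_lt hx)).symm)
      (tendsto_oddExtension (fun _ hy => sign_of_neg hy) hψ.continuous.continuousAt)
  · exact tendsto_nhdsWithin_congr (fun x hx => (hderiv (ne_of_gt hx)).symm)
      (hderivLim.mono_left (nhdsWithin_mono _ fun _ hy => ne_of_gt hy))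
  · exact tendsto_nhdsWithin_congr (fun x hx => (hderiv (ne_of_lt hx)).symm)
      (hderivLim.mono_left (nhdsWithin_mono _ fun _ hy => ne_of_lt hy))
  · linear_combination two_mul_solitonProfile_eq_neg_mul_deriv hp hγ hω hy₀
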